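/- arXiv:2304.08314 — 4 statements merged into one kernel-verified Lean document; each statement's English description precedes it below -/
import Mathlib

section
/- If R is a subquandle of Q, then the induced monoid homomorphism 𝒜_R → 𝒜_Q between enveloping monoids is injective. -/
open Quandles

/-- The defining relation of the enveloping monoid of a quandle. -/
def envRel (Q : Type*) [Quandle Q] : FreeMonoid Q → FreeMonoid Q → Prop :=
  fun a b => ∃ x y : Q,
    a = FreeMonoid.of x * FreeMonoid.of y ∧
    b = FreeMonoid.of (x ◃ y) * FreeMonoid.of x

/-- The enveloping monoid `𝒜_Q` of a quandle `Q`. -/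
abbrev envMonoid (Q : Type*) [Quandle Q] : Type _ :=
  (conGen (envRel Q)).Quotient

/-- The canonical generator `x ∈ Q ⊆ 𝒜_Q`. -/
def envMk (Q : Type*) [Quandle Q] (x : Q) : envMonoid Q :=
  (conGen (envRel Q)).mk' (FreeMonoid.of x)

/-!
Since `ι` commutes with `◃⁻¹` as well as with `◃`, a defining relation `x y ~ (x ◃ y) x` of `𝒜_Q`
with one side a word in the letters `ι R` has the other side in `ι R` too, and is then the image
of a defining relation of `𝒜_R`. So "every preimage of `w` is `𝒜_R`-equivalent to a preimage of
`w'`, and conversely" is a congruence on words over `Q` containing the defining relations of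
`𝒜_Q`; as preimages under the injective `ι` are unique, it reduces `𝒜_Q`-equivalence of images of
words over `R` to `𝒜_R`-equivalence.
-/

open Function

theorem ShelfHom.map_invAct {R S : Type*} [Rack R] [Rack S] (f : R →◃ S) (x y : R) :
    f (x ◃⁻¹ y) = f x ◃⁻¹ f y :=
  (Rack.left_cancel (f x)).mp (by rw [← f.map_act, Rack.act_invAct_eq, Rack.act_invAct_eq])

namespace FreeMonoid

variable {α β : Type*} {f : α → β}

theorem map_injective (hf : Injective f) : Injective (map f) := fun _ _ h =>
  toList.injective (List.map_injective_iff.mpr hf (congrArg toList h))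

theorem map_eq_mul_iff {u : FreeMonoid α} {w₁ w₂ : FreeMonoid β} :
    map f u = w₁ * w₂ ↔ ∃ u₁ u₂, u = u₁ * u₂ ∧ map f u₁ = w₁ ∧ map f u₂ = w₂ := by
  constructor
  · intro h
    obtain ⟨l₁, l₂, hl, h₁, h₂⟩ := List.map_eq_append_iff.mp (congrArg toList h)
    exact ⟨ofList l₁, ofList l₂, toList.injective hl, toList.injective h₁, toList.injective h₂⟩
  · rintro ⟨u₁, u₂, rfl, rfl, rfl⟩
    exact map_mul _ _ _

theorem map_eq_of_iff {u : FreeMonoid α} {b : β} :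
    map f u = of b ↔ ∃ a, u = of a ∧ f a = b := by
  constructor
  · intro h
    obtain ⟨a, hl, ha⟩ := List.map_eq_singleton_iff.mp (congrArg toList h)
    exact ⟨a, toList.injective hl, ha⟩
  · rintro ⟨a, rfl, rfl⟩
    rfl

theorem map_eq_of_mul_of_iff {u : FreeMonoid α} {b₁ b₂ : β} :
    map f u = of b₁ * of b₂ ↔ ∃ a₁ a₂, u = of a₁ * of a₂ ∧ f a₁ = b₁ ∧ f a₂ = b₂ := by
  simp only [map_eq_mul_iff, map_eq_of_iff]
  constructor
  · rintro ⟨_, _, rfl, ⟨a₁, rfl, h₁⟩, ⟨a₂, rfl, h₂⟩⟩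
    exact ⟨a₁, a₂, rfl, h₁, h₂⟩
  · rintro ⟨a₁, a₂, rfl, h₁, h₂⟩
    exact ⟨_, _, rfl, ⟨a₁, rfl, h₁⟩, ⟨a₂, rfl, h₂⟩⟩

variable (f) (c : Con (FreeMonoid α))

def LiftsTo (w w' : FreeMonoid β) : Prop :=
  ∀ u, map f u = w → ∃ v, map f v = w' ∧ c u v

variable {f c}

theorem LiftsTo.refl (w : FreeMonoid β) : LiftsTo f c w w :=
  fun u hu => ⟨u, hu, c.refl u⟩

theorem LiftsTo.trans {w₁ w₂ w₃ : FreeMonoid β} (h₁₂ : LiftsTo f c w₁ w₂)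
    (h₂₃ : LiftsTo f c w₂ w₃) : LiftsTo f c w₁ w₃ := fun u hu => by
  obtain ⟨v, hv, huv⟩ := h₁₂ u hu
  obtain ⟨t, ht, hvt⟩ := h₂₃ v hv
  exact ⟨t, ht, c.trans huv hvt⟩

theorem LiftsTo.mul {w₁ w₁' w₂ w₂' : FreeMonoid β} (h₁ : LiftsTo f c w₁ w₁')
    (h₂ : LiftsTo f c w₂ w₂') : LiftsTo f c (w₁ * w₂) (w₁' * w₂') := fun u hu => by
  obtain ⟨u₁, u₂, rfl, hu₁, hu₂⟩ := map_eq_mul_iff.mp hu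
  obtain ⟨v₁, hv₁, huv₁⟩ := h₁ u₁ hu₁
  obtain ⟨v₂, hv₂, huv₂⟩ := h₂ u₂ hu₂
  exact ⟨v₁ * v₂, by rw [map_mul, hv₁, hv₂], c.mul huv₁ huv₂⟩

variable (f c)

def liftingCon : Con (FreeMonoid β) where
  r w w' := LiftsTo f c w w' ∧ LiftsTo f c w' w
  iseqv :=
    { refl := fun w => ⟨.refl w, .refl w⟩
      symm := And.symm
      trans := fun h h' => ⟨h.1.trans h'.1, h'.2.trans h.2⟩ }
  mul' := fun h h' => ⟨h.1.mul h'.1, h.2.mul h'.2⟩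

end FreeMonoid

open FreeMonoid

section EnvMonoid

variable {R Q : Type*} [Quandle R] [Quandle Q] (ι : R →◃ Q)

theorem envRel_liftsTo (x y : Q) :
    LiftsTo ι (conGen (envRel R)) (of x * of y) (of (x ◃ y) * of x) := by
  intro u hu
  obtain ⟨a, b, rfl, rfl, rfl⟩ := map_eq_of_mul_of_iff.mp hu
  exact ⟨of (a ◃ b) * of a, by simp, ConGen.Rel.of _ _ ⟨a, b, rfl, rfl⟩⟩

theorem envRel_liftsTo_symm (x y : Q) :
    LiftsTo ι (conGen (envRel R)) (of (x ◃ y) * of x) (of x * of y) := by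
  intro v hv
  obtain ⟨c, d, rfl, hc, rfl⟩ := map_eq_of_mul_of_iff.mp hv
  refine ⟨of d * of (d ◃⁻¹ c), ?_, ?_⟩
  · rw [map_mul, map_of, map_of, ι.map_invAct, hc, Rack.invAct_act_eq]
  · have hrel : envRel R (of d * of (d ◃⁻¹ c)) (of c * of d) := by
      refine ⟨d, d ◃⁻¹ c, rfl, ?_⟩
      rw [Rack.act_invAct_eq]
    exact (conGen (envRel R)).symm (ConGen.Rel.of _ _ hrel)

theorem conGen_envRel_le_liftingCon :
    conGen (envRel Q) ≤ liftingCon ι (conGen (envRel R)) :=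
  Con.conGen_le.mpr fun _ _ ⟨x, y, hw, hw'⟩ => by
    subst hw hw'
    exact ⟨envRel_liftsTo ι x y, envRel_liftsTo_symm ι x y⟩

theorem conGen_envRel_of_map (hι : Injective ι) {u v : FreeMonoid R}
    (h : conGen (envRel Q) (map ι u) (map ι v)) : conGen (envRel R) u v := by
  obtain ⟨v', hv', huv'⟩ := (conGen_envRel_le_liftingCon ι h).1 u rfl
  rwa [map_injective hι hv'] at huv'

end EnvMonoid

/-- If `R` is a subquandle of `Q` (i.e. `ι : R → Q` is an injective quandle
morphism), then the induced monoid homomorphism `𝒜_R → 𝒜_Q` between enveloping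
monoids is injective. -/
theorem stmt11 {R Q : Type*} [Quandle R] [Quandle Q] (ι : R →◃ Q)
    (hι : Function.Injective ι)
    (g : envMonoid R →* envMonoid Q)
    (hg : ∀ x : R, g (envMk R x) = envMk Q (ι x)) :
    Function.Injective g := by
  have hg_mk : ∀ u, g ((conGen (envRel R)).mk' u) = (conGen (envRel Q)).mk' (map ι u) :=
    DFunLike.congr_fun (hom_eq hg :
      g.comp (conGen (envRel R)).mk' = (conGen (envRel Q)).mk'.comp (map ι))
  intro a b hab
  obtain ⟨u, rfl⟩ := Con.mk'_surjective a
  obtain ⟨v, rfl⟩ := Con.mk'_surjective b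
  rw [hg_mk, hg_mk] at hab
  exact (Con.eq _).mpr (conGen_envRel_of_map ι hι ((Con.eq _).mp hab))
end

section
/- In the enveloping monoid of a finite quandle Q, the submonoid of saturated elements corresponding to a subquandle R is saturated: if a, b ∈ 𝒜_Q and a·b ∈ 𝒜_R, then a ∈ 𝒜_R and b ∈ 𝒜_R. -/
/-!
Call a word in the free monoid on `Q` an `S`-word if all its letters lie in `S`. Being an
`S`-word is multiplicative (`u * v` is one iff `u` and `v` are), so it is constant on classes of
the congruence generated by `x y ~ (x ◃ y) x` as soon as it is preserved by each defining
relation in both directions. From left to right this is closure of `S` under `◃`; from right to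
left it says that `x ∈ S` and `x ◃ y ∈ S` force `y ∈ S`, which holds because `x ◃ ·` is an
injective self-map of the finite set `S`, hence surjective onto it.
-/

open Quandles

/-- For a subset `S ⊆ Q`, the subset `𝒜_S ⊆ 𝒜_Q` of elements represented by
words all of whose letters lie in `S`. -/
def envSub (Q : Type*) [Quandle Q] (S : Set Q) : Set (envMonoid Q) :=
  { a | ∃ l : List Q, (∀ x ∈ l, x ∈ S) ∧
      a = (conGen (envRel Q)).mk' (FreeMonoid.ofList l) }

namespace Rack

lemma mem_of_act_mem {R : Type*} [Rack R] {S : Set R} (hS_fin : S.Finite)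
    (hS : ∀ x ∈ S, ∀ y ∈ S, x ◃ y ∈ S) {x y : R} (hx : x ∈ S) (hxy : x ◃ y ∈ S) : y ∈ S := by
  have hbij : Set.BijOn (x ◃ ·) S S :=
    (hS_fin.injOn_iff_bijOn_of_mapsTo (hS x hx)).mp (act' x).injective.injOn
  obtain ⟨z, hz, hzy⟩ := hbij.surjOn hxy
  rwa [← (left_cancel x).mp hzy]

end Rack

lemma ConGen.Rel.iff_of_mul_iff {M : Type*} [Mul M] {r : M → M → Prop} {P : M → Prop}
    (hmul : ∀ a b, P (a * b) ↔ P a ∧ P b) (hr : ∀ a b, r a b → (P a ↔ P b))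
    {a b : M} (h : ConGen.Rel r a b) : P a ↔ P b := by
  induction h with
  | of a b hab => exact hr a b hab
  | refl => rfl
  | symm _ ih => exact ih.symm
  | trans _ _ ih₁ ih₂ => exact ih₁.trans ih₂
  | mul _ _ ih₁ ih₂ => rw [hmul, hmul, ih₁, ih₂]

lemma FreeMonoid.forall_mem_toList_mul {α : Type*} {P : α → Prop} (u v : FreeMonoid α) :
    (∀ x ∈ (u * v).toList, P x) ↔ (∀ x ∈ u.toList, P x) ∧ (∀ x ∈ v.toList, P x) := by
  simp only [toList_mul, List.forall_mem_append]

lemma envRel_forall_mem_iff {Q : Type*} [Quandle Q] {S : Set Q} (hS_fin : S.Finite)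
    (hS : ∀ x ∈ S, ∀ y ∈ S, x ◃ y ∈ S) {u v : FreeMonoid Q} (h : envRel Q u v) :
    (∀ x ∈ u.toList, x ∈ S) ↔ (∀ x ∈ v.toList, x ∈ S) := by
  obtain ⟨x, y, rfl, rfl⟩ := h
  simp only [FreeMonoid.forall_mem_toList_mul, FreeMonoid.toList_of, List.forall_mem_singleton]
  exact ⟨fun ⟨hx, hy⟩ => ⟨hS x hx y hy, hx⟩,
    fun ⟨hxy, hx⟩ => ⟨hx, Rack.mem_of_act_mem hS_fin hS hx hxy⟩⟩

lemma mk'_mem_envSub_iff {Q : Type*} [Quandle Q] {S : Set Q} (hS_fin : S.Finite)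
    (hS : ∀ x ∈ S, ∀ y ∈ S, x ◃ y ∈ S) (w : FreeMonoid Q) :
    (conGen (envRel Q)).mk' w ∈ envSub Q S ↔ ∀ x ∈ w.toList, x ∈ S := by
  refine ⟨fun ⟨l, hl, hw⟩ => ?_, fun hw => ⟨w.toList, hw, rfl⟩⟩
  have hrel : ConGen.Rel (envRel Q) w (FreeMonoid.ofList l) := (Con.eq _).mp hw
  refine (hrel.iff_of_mul_iff FreeMonoid.forall_mem_toList_mul
    fun _ _ h => envRel_forall_mem_iff hS_fin hS h).mpr ?_
  rwa [FreeMonoid.toList_ofList]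

/-- In the enveloping monoid of a finite quandle `Q`, the submonoid `𝒜_R`
corresponding to a subquandle `R ≤ Q` is saturated: if `a, b ∈ 𝒜_Q` and
`a·b ∈ 𝒜_R`, then `a ∈ 𝒜_R` and `b ∈ 𝒜_R`. -/
theorem stmt12 {Q : Type*} [Quandle Q] [Finite Q] (S : Set Q)
    (hS : ∀ x ∈ S, ∀ y ∈ S, x ◃ y ∈ S)
    (a b : envMonoid Q) (h : a * b ∈ envSub Q S) :
    a ∈ envSub Q S ∧ b ∈ envSub Q S := by
  obtain ⟨u, rfl⟩ := Con.mk'_surjective a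
  obtain ⟨v, rfl⟩ := Con.mk'_surjective b
  rw [← map_mul, mk'_mem_envSub_iff S.toFinite hS, FreeMonoid.forall_mem_toList_mul] at h
  rwa [mk'_mem_envSub_iff S.toFinite hS, mk'_mem_envSub_iff S.toFinite hS]
end

section
/- For a finite quandle Q with exponent N = exp_Q (the smallest positive integer with φ_x^N = Id on 𝒜_Q for all x ∈ Q), the element x^N lies in the center of the enveloping monoid 𝒜_Q for every x ∈ Q. -/
open Quandles

section

variable {Q : Type*} [Quandle Q]

lemma envMk_mul_envMk (x y : Q) :
    envMk Q x * envMk Q y = envMk Q (x ◃ y) * envMk Q x :=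
  Quotient.sound (ConGen.Rel.of _ _ ⟨x, y, rfl, rfl⟩)

lemma envMk_pow_mul_envMk (x y : Q) (n : ℕ) :
    envMk Q x ^ n * envMk Q y = envMk Q ((fun z => x ◃ z)^[n] y) * envMk Q x ^ n := by
  induction n generalizing y with
  | zero => simp
  | succ n ih =>
    rw [pow_succ, mul_assoc, envMk_mul_envMk, ← mul_assoc, ih (x ◃ y), mul_assoc, ← pow_succ,
      Function.iterate_succ_apply]

lemma commute_of_forall_commute_envMk {c : envMonoid Q}
    (hc : ∀ y : Q, Commute c (envMk Q y)) (a : envMonoid Q) : Commute c a := by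
  induction a using Con.induction_on with
  | H w =>
    induction w using FreeMonoid.recOn with
    | one => exact Commute.one_right c
    | of_mul y w ih => exact (hc y).mul_right ih

lemma commute_envMk_pow_of_iterate_eq_id {x : Q} {n : ℕ}
    (hn : ∀ y : Q, (fun z => x ◃ z)^[n] y = y) (a : envMonoid Q) :
    Commute (envMk Q x ^ n) a :=
  commute_of_forall_commute_envMk (fun y => by
    rw [Commute, SemiconjBy, envMk_pow_mul_envMk, hn]) a

end

theorem stmt13_general {Q : Type*} [Quandle Q] (N : ℕ)
    (hN : ∀ x y : Q, (fun z => x ◃ z)^[N] y = y)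
    (x : Q) (a : envMonoid Q) :
    (envMk Q x) ^ N * a = a * (envMk Q x) ^ N :=
  commute_envMk_pow_of_iterate_eq_id (hN x) a

/-- For a finite quandle `Q` with exponent `N = exp_Q` (the smallest positive
integer such that `φ_x^N = Id` for all `x ∈ Q`, equivalently on `𝒜_Q` since the
conjugation automorphisms of `𝒜_Q` extend the quandle action and `𝒜_Q` is
generated by `Q`), the element `x^N` is central in the enveloping monoid `𝒜_Q`
for every `x ∈ Q`. -/
theorem stmt13 {Q : Type*} [Quandle Q] [Finite Q] (N : ℕ) (hNpos : 0 < N)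
    (hN : ∀ x y : Q, (fun z => x ◃ z)^[N] y = y)
    (hmin : ∀ M : ℕ, 0 < M → (∀ x y : Q, (fun z => x ◃ z)^[M] y = y) → N ≤ M)
    (x : Q) (a : envMonoid Q) :
    (envMk Q x) ^ N * a = a * (envMk Q x) ^ N :=
  stmt13_general N hN x a
end

section
/- For finite nonempty quandles Q and R, the natural map π₀(Q × R) → π₀(Q) × π₀(R) induced by the projections is a bijection. -/
open Quandles

/-- The product quandle: `(x,y) ◃ (x',y') = (x ◃ x', y ◃ y')`. -/
instance prodQuandle {Q R : Type*} [Quandle Q] [Quandle R] : Quandle (Q × R) where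
  act a b := (a.1 ◃ b.1, a.2 ◃ b.2)
  self_distrib {x y z} := by
    simp only [Prod.mk.injEq]
    exact ⟨Shelf.self_distrib, Shelf.self_distrib⟩
  invAct a b := (a.1 ◃⁻¹ b.1, a.2 ◃⁻¹ b.2)
  left_inv a b := by
    simp [Rack.invAct_act_eq]
  right_inv a b := by
    simp [Rack.act_invAct_eq]
  fix {x} := by
    simp [Quandle.fix]

/-- The relation generating the connected-components equivalence: `x ◃ y ∼ y`. -/
def quandleCompRel (Q : Type*) [Quandle Q] : Q → Q → Prop :=
  fun a b => ∃ x : Q, x ◃ b = a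

/-- `π₀(Q)`: the set of connected components of a quandle. -/
def pi0 (Q : Type*) [Quandle Q] : Type _ :=
  Quot (quandleCompRel Q)

namespace quandleCompRel

variable {Q R : Type*} [Quandle Q] [Quandle R]

theorem map (f : Q →◃ R) {a b : Q} (h : quandleCompRel Q a b) :
    quandleCompRel R (f a) (f b) := by
  obtain ⟨x, rfl⟩ := h
  exact ⟨f x, (ShelfHom.map_act f).symm⟩

/-- `b ◃ b = b` lets a step in the first factor be lifted with the second one fixed. -/
theorem prod_left {a a' : Q} (h : quandleCompRel Q a a') (b : R) :
    quandleCompRel (Q × R) (a, b) (a', b) := by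
  obtain ⟨x, rfl⟩ := h
  exact ⟨(x, b), Prod.ext rfl Quandle.fix⟩

theorem prod_right (a : Q) {b b' : R} (h : quandleCompRel R b b') :
    quandleCompRel (Q × R) (a, b) (a, b') := by
  obtain ⟨y, rfl⟩ := h
  exact ⟨(a, y), Prod.ext Quandle.fix rfl⟩

end quandleCompRel

def pi0.map {Q R : Type*} [Quandle Q] [Quandle R] (f : Q →◃ R) : pi0 Q → pi0 R :=
  Quot.map f fun _ _ => quandleCompRel.map f

def ShelfHom.fst {Q R : Type*} [Quandle Q] [Quandle R] : Q × R →◃ Q where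
  toFun := Prod.fst
  map_act' := rfl

def ShelfHom.snd {Q R : Type*} [Quandle Q] [Quandle R] : Q × R →◃ R where
  toFun := Prod.snd
  map_act' := rfl

def pi0ProdEquiv (Q R : Type*) [Quandle Q] [Quandle R] : pi0 (Q × R) ≃ pi0 Q × pi0 R where
  toFun c := (pi0.map ShelfHom.fst c, pi0.map ShelfHom.snd c)
  invFun q := Quot.map₂ Prod.mk (fun a _ _ => quandleCompRel.prod_right a)
    (fun _ _ b h => quandleCompRel.prod_left h b) q.1 q.2
  left_inv := Quot.ind fun _ => rfl
  right_inv := fun ⟨qa, qb⟩ => Quot.induction_on₂ qa qb fun _ _ => rfl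

theorem stmt18_general {Q R : Type*} [Quandle Q] [Quandle R] :
    ∃ e : pi0 (Q × R) ≃ pi0 Q × pi0 R,
      ∀ p : Q × R,
        e (Quot.mk (quandleCompRel (Q × R)) p) =
          (Quot.mk (quandleCompRel Q) p.1, Quot.mk (quandleCompRel R) p.2) :=
  ⟨pi0ProdEquiv Q R, fun _ => rfl⟩

/-- For finite nonempty quandles `Q` and `R`, the natural map
`π₀(Q × R) → π₀(Q) × π₀(R)` induced by the projections is a bijection. -/
theorem stmt18 {Q R : Type*} [Quandle Q] [Quandle R] [Finite Q] [Finite R]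
    [Nonempty Q] [Nonempty R] :
    ∃ e : pi0 (Q × R) ≃ pi0 Q × pi0 R,
      ∀ p : Q × R,
        e (Quot.mk (quandleCompRel (Q × R)) p) =
          (Quot.mk (quandleCompRel Q) p.1, Quot.mk (quandleCompRel R) p.2) :=
  stmt18_general
end
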